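/- (Theorem 1.) Let d ≥ 1, K ≥ 2, let f be a measurable score function on ℝ^d with K classes, let μ be a probability measure on ℝ^d, let t ∈ ℝ^d be the Trojan trigger and y_t a target class. Assume: (i) for μ-almost every η, y_t is the strict argmax of f at t + η; and (ii) there exist two distinct classes z1 ≠ z2 and measurable sets A1, A2 ⊆ ℝ^d with μ(A1) > 0 and μ(A2) > 0 such that for every x ∈ A_i, z_i is the strict argmax of f at x (i = 1, 2). Then for all x̂1, x̂2 ∈ ℝ^d: the Trojan input x̂1 + t, perturbed by noise drawn from μ'_{x̂1}, satisfies δ(x̂1 + t) = 1, while the benign input x̂2, perturbed by noise drawn from μ'_{x̂2}, satisfies q_k < 1 for every class k and hence δ(x̂2) < 1. Consequently δ of any Trojan example is strictly larger than δ of any benign example. -/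
import Mathlib

open MeasureTheory

/-- Class `k` is the strict argmax of the score function `f` at input `x`. -/
def IsStrictArgmax {d K : ℕ} (f : Fin K → (Fin d → ℝ) → ℝ) (x : Fin d → ℝ) (k : Fin K) : Prop :=
  ∀ j : Fin K, j ≠ k → f j x < f k x

/-- Prediction probability of class `k` for input `x` under noise distribution `ν`. -/
noncomputable def predProb {d K : ℕ} (ν : Measure (Fin d → ℝ))
    (f : Fin K → (Fin d → ℝ) → ℝ) (x : Fin d → ℝ) (k : Fin K) : ℝ :=
  (ν {η | IsStrictArgmax f (x + η) k}).toReal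

lemma finUnivNE {K : ℕ} (hK : 2 ≤ K) : (Finset.univ : Finset (Fin K)).Nonempty :=
  ⟨⟨0, by omega⟩, Finset.mem_univ _⟩

lemma finEraseNE {K : ℕ} (hK : 2 ≤ K) (i : Fin K) :
    ((Finset.univ : Finset (Fin K)).erase i).Nonempty := by
  apply Finset.card_pos.mp
  rw [Finset.card_erase_of_mem (Finset.mem_univ i), Finset.card_univ, Fintype.card_fin]
  omega

/-- `p1`: the largest of the `K` values `q k`. -/
noncomputable def topVal {K : ℕ} (hK : 2 ≤ K) (q : Fin K → ℝ) : ℝ :=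
  Finset.univ.sup' (finUnivNE hK) q

/-- An index attaining the maximum of `q`. -/
noncomputable def argmaxIdx {K : ℕ} (hK : 2 ≤ K) (q : Fin K → ℝ) : Fin K :=
  Classical.choose (Finset.exists_mem_eq_sup' (finUnivNE hK) q)

/-- `p2`: the second-largest value of `q`, i.e. the maximum of the remaining
values after removing one index attaining the maximum. -/
noncomputable def sndVal {K : ℕ} (hK : 2 ≤ K) (q : Fin K → ℝ) : ℝ :=
  (Finset.univ.erase (argmaxIdx hK q)).sup' (finEraseNE hK _) q

/-- `δ(x) = p1 - p2` computed from the prediction probabilities of input `x`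
under noise distribution `ν`. -/
noncomputable def deltaOf {d K : ℕ} (hK : 2 ≤ K) (ν : Measure (Fin d → ℝ))
    (f : Fin K → (Fin d → ℝ) → ℝ) (x : Fin d → ℝ) : ℝ :=
  topVal hK (predProb ν f x) - sndVal hK (predProb ν f x)

/- ===== auxiliary lemmas ===== -/

lemma argmaxSet_meas {d K : ℕ} {f : Fin K → (Fin d → ℝ) → ℝ} (hmeas : ∀ k, Measurable (f k))
    (x : Fin d → ℝ) (k : Fin K) : MeasurableSet {η | IsStrictArgmax f (x + η) k} := by
  have h : {η | IsStrictArgmax f (x + η) k}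
      = ⋂ j, {η : Fin d → ℝ | j ≠ k → f j (x + η) < f k (x + η)} := by
    ext η; simp [IsStrictArgmax, Set.mem_iInter]
  rw [h]
  refine MeasurableSet.iInter fun j => ?_
  by_cases hj : j = k
  · simp [hj]
  · simp only [hj, ne_eq, not_false_iff, true_implies]
    exact measurableSet_lt ((hmeas j).comp (measurable_const.add measurable_id))
      ((hmeas k).comp (measurable_const.add measurable_id))

lemma predProb_map {d K : ℕ} {f : Fin K → (Fin d → ℝ) → ℝ} (hmeas : ∀ k, Measurable (f k))
    (μ : Measure (Fin d → ℝ)) (c x : Fin d → ℝ) (k : Fin K) :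
    predProb (μ.map (fun η => η - c)) f x k
      = (μ {η | IsStrictArgmax f (x + (η - c)) k}).toReal := by
  unfold predProb
  have hg : Measurable (fun η : Fin d → ℝ => η - c) := measurable_id.sub measurable_const
  rw [Measure.map_apply hg (argmaxSet_meas hmeas x k)]
  rfl

lemma strictArgmax_unique {d K : ℕ} {f : Fin K → (Fin d → ℝ) → ℝ} {y : Fin d → ℝ}
    {j k : Fin K} (hj : IsStrictArgmax f y j) (hk : IsStrictArgmax f y k) : j = k := by
  by_contra h
  exact lt_asymm (hj k (Ne.symm h)) (hk j h)

lemma topVal_eq_argmax {K : ℕ} (hK : 2 ≤ K) (q : Fin K → ℝ) :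
    topVal hK q = q (argmaxIdx hK q) :=
  (Classical.choose_spec (Finset.exists_mem_eq_sup' (finUnivNE hK) q)).2

lemma delta_of_indicator {K : ℕ} (hK : 2 ≤ K) (q : Fin K → ℝ) (i0 : Fin K)
    (h1 : q i0 = 1) (h0 : ∀ j, j ≠ i0 → q j = 0) :
    topVal hK q - sndVal hK q = 1 := by
  have htop : topVal hK q = 1 := by
    apply le_antisymm
    · apply Finset.sup'_le
      intro j _
      by_cases hj : j = i0
      · simp [hj, h1]
      · simp [h0 j hj]
    · calc (1 : ℝ) = q i0 := h1.symm
        _ ≤ _ := Finset.le_sup' q (Finset.mem_univ i0)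
  have hidx : argmaxIdx hK q = i0 := by
    by_contra h
    have h2 := topVal_eq_argmax hK q
    rw [htop, h0 _ h] at h2
    norm_num at h2
  have hsnd : sndVal hK q = 0 := by
    apply le_antisymm
    · apply Finset.sup'_le
      intro j hj
      rw [hidx] at hj
      exact le_of_eq (h0 j (Finset.ne_of_mem_erase hj))
    · obtain ⟨j, hj⟩ := finEraseNE hK (argmaxIdx hK q)
      have hq : q j = 0 := by
        apply h0
        rw [hidx] at hj
        exact Finset.ne_of_mem_erase hj
      calc (0 : ℝ) = q j := hq.symm
        _ ≤ _ := Finset.le_sup' q hj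
  rw [htop, hsnd]; ring

/-- Theorem 1: Under the perfect-attacker condition (i) and the
correct-classification condition (ii), every Trojan input `x̂1 + t` under noise
`μ'_{x̂1}` has `δ = 1`, while every benign input `x̂2` under noise `μ'_{x̂2}` has
`q_k < 1` for every class `k` and `δ < 1`; hence δ of any Trojan example is
strictly larger than δ of any benign example. -/
theorem trojan_delta_gt_benign_delta {d K : ℕ} (hd : 1 ≤ d) (hK : 2 ≤ K)
    (f : Fin K → (Fin d → ℝ) → ℝ)
    (hmeas : ∀ k, Measurable (f k))
    (hnn : ∀ (x : Fin d → ℝ) (k : Fin K), 0 ≤ f k x)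
    (hsum : ∀ x : Fin d → ℝ, ∑ k, f k x = 1)
    (μ : Measure (Fin d → ℝ)) [IsProbabilityMeasure μ]
    (t : Fin d → ℝ) (yt : Fin K)
    (hatt : ∀ᵐ η ∂μ, IsStrictArgmax f (t + η) yt)
    (z1 z2 : Fin K) (hz : z1 ≠ z2)
    (A1 A2 : Set (Fin d → ℝ)) (hA1meas : MeasurableSet A1) (hA2meas : MeasurableSet A2)
    (hA1pos : 0 < μ A1) (hA2pos : 0 < μ A2)
    (hA1 : ∀ x ∈ A1, IsStrictArgmax f x z1)
    (hA2 : ∀ x ∈ A2, IsStrictArgmax f x z2) :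
    ∀ xhat1 xhat2 : Fin d → ℝ,
      deltaOf hK (μ.map (fun η => η - xhat1)) f (xhat1 + t) = 1 ∧
      (∀ k : Fin K, predProb (μ.map (fun η => η - xhat2)) f xhat2 k < 1) ∧
      deltaOf hK (μ.map (fun η => η - xhat2)) f xhat2 < 1 ∧
      deltaOf hK (μ.map (fun η => η - xhat2)) f xhat2 <
        deltaOf hK (μ.map (fun η => η - xhat1)) f (xhat1 + t) := by
  intro xhat1 xhat2
  -- the null set of the attacker condition
  have hnull : μ {η | ¬ IsStrictArgmax f (t + η) yt} = 0 := ae_iff.mp hatt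
  -- trojan prediction probabilities
  have hq1 : ∀ k, predProb (μ.map (fun η => η - xhat1)) f (xhat1 + t) k
      = (μ {η | IsStrictArgmax f (t + η) k}).toReal := by
    intro k
    rw [predProb_map hmeas]
    congr 2
    ext η
    have h : xhat1 + t + (η - xhat1) = t + η := by abel
    simp only [Set.mem_setOf_eq, h]
  have hq1yt : predProb (μ.map (fun η => η - xhat1)) f (xhat1 + t) yt = 1 := by
    rw [hq1]
    have hμ : μ {η | IsStrictArgmax f (t + η) yt} = 1 := by
      have hc : μ {η | IsStrictArgmax f (t + η) yt}ᶜ = 0 := by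
        rw [Set.compl_setOf]; exact hnull
      exact (prob_compl_eq_zero_iff (argmaxSet_meas hmeas t yt)).mp hc
    rw [hμ]; simp
  have hq1k : ∀ k, k ≠ yt → predProb (μ.map (fun η => η - xhat1)) f (xhat1 + t) k = 0 := by
    intro k hk
    rw [hq1]
    have : μ {η | IsStrictArgmax f (t + η) k} = 0 := by
      apply measure_mono_null _ hnull
      intro η hη hyt
      exact hk (strictArgmax_unique hη hyt)
    rw [this]; simp
  have hdelta1 : deltaOf hK (μ.map (fun η => η - xhat1)) f (xhat1 + t) = 1 :=
    delta_of_indicator hK _ yt hq1yt hq1k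
  -- benign prediction probabilities
  have hq2 : ∀ k, predProb (μ.map (fun η => η - xhat2)) f xhat2 k
      = (μ {η | IsStrictArgmax f η k}).toReal := by
    intro k
    rw [predProb_map hmeas]
    congr 2
    ext η
    have h : xhat2 + (η - xhat2) = η := by abel
    simp only [Set.mem_setOf_eq, h]
  have hkey : ∀ (A : Set (Fin d → ℝ)) (z : Fin K), MeasurableSet A → 0 < μ A →
      (∀ x ∈ A, IsStrictArgmax f x z) → ∀ k, z ≠ k →
      (μ {η | IsStrictArgmax f η k}).toReal < 1 := by
    intro A z hAmeas hApos hA k hzk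
    have hsub : {η | IsStrictArgmax f η k} ⊆ Aᶜ := by
      intro η hη hηA
      exact hzk (strictArgmax_unique (hA η hηA) hη)
    have hAc : μ Aᶜ < 1 := by
      rw [measure_compl hAmeas (measure_ne_top μ A), measure_univ]
      exact ENNReal.sub_lt_self ENNReal.one_ne_top one_ne_zero hApos.ne'
    calc (μ {η | IsStrictArgmax f η k}).toReal
        ≤ (μ Aᶜ).toReal := ENNReal.toReal_mono (measure_ne_top μ _) (measure_mono hsub)
      _ < 1 := by
          have := (ENNReal.toReal_lt_toReal (measure_ne_top μ _) ENNReal.one_ne_top).mpr hAc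
          simpa using this
  have hq2lt : ∀ k, predProb (μ.map (fun η => η - xhat2)) f xhat2 k < 1 := by
    intro k
    rw [hq2]
    by_cases hk : k = z1
    · exact hkey A2 z2 hA2meas hA2pos hA2 k (by rw [hk]; exact hz.symm)
    · exact hkey A1 z1 hA1meas hA1pos hA1 k (Ne.symm hk)
  -- δ of benign input is < 1
  have hq2nn : ∀ k, 0 ≤ predProb (μ.map (fun η => η - xhat2)) f xhat2 k := by
    intro k; exact ENNReal.toReal_nonneg
  have htop2 : topVal hK (predProb (μ.map (fun η => η - xhat2)) f xhat2) < 1 := by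
    rw [topVal_eq_argmax]
    exact hq2lt _
  have hsnd2 : 0 ≤ sndVal hK (predProb (μ.map (fun η => η - xhat2)) f xhat2) := by
    obtain ⟨j, hj⟩ := finEraseNE hK
      (argmaxIdx hK (predProb (μ.map (fun η => η - xhat2)) f xhat2))
    calc (0 : ℝ) ≤ _ := hq2nn j
      _ ≤ _ := Finset.le_sup' _ hj
  have hdelta2 : deltaOf hK (μ.map (fun η => η - xhat2)) f xhat2 < 1 := by
    unfold deltaOf
    linarith
  exact ⟨hdelta1, hq2lt, hdelta2, by rw [hdelta1]; exact hdelta2⟩
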